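/- Let p, k be primes with k ≤ p, and suppose there exists a Z/kZ-covering family F₁ of N vectors in (Z/kZ)^{ℓ₁}. Then there exists a [0,k-1]-covering family F₂ of N vectors in (Z/pZ)^{2ℓ₁·⌈log₂ k⌉}, where [0,k-1]-covering means: for every pair of distinct vectors and every integer k' with 0 ≤ k' ≤ k-1, some coordinate difference equals k' mod p. -/

import Mathlib

/-!
Lift each entry `a ∈ [0, k-1]` of a vector to the integer `a` and, in the copy indexed by bit `j`,
to `a + k` whenever bit `j` of `a` is `0`. If `a - b ≡ k' (mod k)` then either `a - b = k'`, seen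
in an unshifted copy, or `a - b = k' - k`; then `a < b`, so some bit is `0` in `a` and `1` in `b`,
and the copy of that bit sees `(a + k) - b = k'`. As `k ≤ p`, the unshifted copies make the lift
injective.
-/

def IsCovering {ι R : Type*} [Sub R] (F : Set (ι → R)) (T : Set R) : Prop :=
  ∀ v ∈ F, ∀ w ∈ F, v ≠ w → ∀ t ∈ T, ∃ i, v i - w i = t

theorem IsCovering.image_comp {κ ι R : Type*} [Sub R] {F : Set (ι → R)} {T : Set R}
    (hF : IsCovering F T) {e : κ → ι} (he : e.Surjective) :
    IsCovering ((· ∘ e) '' F) T := by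
  rintro _ ⟨v, hv, rfl⟩ _ ⟨w, hw, rfl⟩ hvw t ht
  obtain ⟨i, hi⟩ := hF v hv w hw (fun h => hvw (h ▸ rfl)) t ht
  obtain ⟨j, rfl⟩ := he i
  exact ⟨j, hi⟩

theorem Nat.exists_testBit_false_true_of_lt {a b : ℕ} (h : a < b) :
    ∃ j, a.testBit j = false ∧ b.testBit j = true := by
  by_contra! hab
  exact (Nat.le_of_testBit fun j hj => by simpa [hj] using mt (hab j)).not_gt h

theorem Nat.eq_add_or_add_eq_add_of_modEq {k a b c : ℕ} (ha : a < k) (hb : b < k) (hc : c < k)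
    (h : a ≡ b + c [MOD k]) : a = b + c ∨ a + k = b + c := by
  have hq : (b + c) / k < 2 := Nat.div_lt_of_lt_mul (by omega)
  have hdiv := Nat.mod_add_div (b + c) k
  rw [← h, Nat.mod_eq_of_lt ha] at hdiv
  interval_cases (b + c) / k <;> omega

theorem Nat.lt_of_testBit_eq_true {b L j : ℕ} (hb : b < 2 ^ L) (hj : b.testBit j = true) :
    j < L :=
  (Nat.pow_lt_pow_iff_right one_lt_two).mp ((Nat.ge_two_pow_of_testBit hj).trans_lt hb)

section BitLift

variable {ι : Type*} (p k L : ℕ)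

def bitLift (u : ι → ZMod k) : (Fin L ⊕ Fin L) × ι → ZMod p
  | (.inl j, i) => ((u i).val + if (u i).val.testBit j then 0 else k : ℕ)
  | (.inr _, i) => ((u i).val : ℕ)

variable {p k L}

theorem bitLift_injective [NeZero k] (hkp : k ≤ p) (hL : 0 < L) :
    Function.Injective (bitLift p k L : (ι → ZMod k) → _) := by
  intro u w h
  funext i
  have hval (x : ZMod k) : x.val < p := (ZMod.val_lt x).trans_le hkp
  have hi := congrArg ZMod.val (congrFun h (.inr ⟨0, hL⟩, i))
  simp only [bitLift, ZMod.val_natCast_of_lt (hval _)] at hi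
  exact ZMod.val_injective k hi

theorem exists_bitLift_sub_eq [NeZero k] (hkL : k ≤ 2 ^ L) (hL : 0 < L) {u w : ι → ZMod k}
    {i : ι} {c : ℕ} (hc : c < k) (hi : u i - w i = c) :
    ∃ x, bitLift p k L u x - bitLift p k L w x = c := by
  have hmod : (u i).val ≡ (w i).val + c [MOD k] := by
    rw [← ZMod.natCast_eq_natCast_iff, Nat.cast_add, ZMod.natCast_zmod_val,
      ZMod.natCast_zmod_val, ← sub_eq_iff_eq_add', hi]
  rcases Nat.eq_add_or_add_eq_add_of_modEq (ZMod.val_lt _) (ZMod.val_lt _) hc hmod with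
    hab | hab
  · refine ⟨(.inr ⟨0, hL⟩, i), ?_⟩
    rw [bitLift, bitLift, sub_eq_iff_eq_add', hab, Nat.cast_add, add_comm]
  · -- the copy of a bit that is `0` in `u i` and `1` in `w i` shifts `u i` by `k` but not `w i`
    have hlt : (u i).val < (w i).val := by omega
    obtain ⟨j, hju, hjw⟩ := Nat.exists_testBit_false_true_of_lt hlt
    have hjL : j < L := Nat.lt_of_testBit_eq_true ((ZMod.val_lt _).trans_le hkL) hjw
    refine ⟨(.inl ⟨j, hjL⟩, i), ?_⟩
    simp only [bitLift, hju, hjw, Bool.false_eq_true, if_true, if_false, Nat.add_zero, hab,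
      Nat.cast_add, add_sub_cancel_left]

end BitLift

theorem IsCovering.image_bitLift {ι : Type*} {p k L : ℕ} [NeZero k] (hkL : k ≤ 2 ^ L)
    (hL : 0 < L) {F : Set (ι → ZMod k)} (hF : IsCovering F Set.univ) :
    IsCovering (bitLift p k L '' F) (((↑) : ℕ → ZMod p) '' Set.Iio k) := by
  rintro _ ⟨u, hu, rfl⟩ _ ⟨w, hw, rfl⟩ huw _ ⟨c, hc, rfl⟩
  obtain ⟨i, hi⟩ := hF u hu w hw (ne_of_apply_ne _ huw) c trivial
  exact exists_bitLift_sub_eq hkL hL hc hi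

theorem stmt6_general (p k ℓ₁ N : ℕ) (hk : k.Prime) (hkp : k ≤ p)
    (F₁ : Finset (Fin ℓ₁ → ZMod k)) (hcard : F₁.card = N)
    (hcov : ∀ v ∈ F₁, ∀ w ∈ F₁, v ≠ w → ∀ s : ZMod k, ∃ i, v i - w i = s) :
    ∃ F₂ : Finset (Fin (2 * ℓ₁ * Nat.clog 2 k) → ZMod p),
      F₂.card = N ∧
      ∀ v ∈ F₂, ∀ w ∈ F₂, v ≠ w →
        ∀ k' : ℕ, k' ≤ k - 1 → ∃ i, v i - w i = (k' : ZMod p) := by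
  have : NeZero k := ⟨hk.ne_zero⟩
  set L := Nat.clog 2 k
  have hL : 0 < L := Nat.clog_pos one_lt_two hk.one_lt
  have e : Fin (2 * ℓ₁ * L) ≃ (Fin L ⊕ Fin L) × Fin ℓ₁ :=
    Fintype.equivOfCardEq <| by
      simp only [Fintype.card_fin, Fintype.card_prod, Fintype.card_sum]; ring
  have hF₁ : IsCovering (F₁ : Set (Fin ℓ₁ → ZMod k)) Set.univ :=
    fun v hv w hw hvw s _ => hcov v hv w hw hvw s
  have hF₂ := (hF₁.image_bitLift (p := p) (Nat.le_pow_clog one_lt_two k) hL).image_comp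
    e.surjective
  refine ⟨(F₁.image (bitLift p k L)).image (· ∘ e), ?_, ?_⟩
  · rw [Finset.card_image_of_injective _ e.surjective.injective_comp_right,
      Finset.card_image_of_injective _ (bitLift_injective hkp hL), hcard]
  · intro v hv w hw hvw k' hk'
    rw [← Finset.coe_image, ← Finset.coe_image] at hF₂
    exact hF₂ v hv w hw hvw k' ⟨k', Nat.lt_of_le_pred hk.pos hk', rfl⟩

/-- From a `ZMod k`-covering family of `N` vectors in `(ZMod k)^ℓ₁` (`k ≤ p` primes),
one gets a `[0, k-1]`-covering family of `N` vectors in `(ZMod p)^(2 ℓ₁ ⌈log₂ k⌉)`. -/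
theorem stmt6 (p k ℓ₁ N : ℕ) (hp : p.Prime) (hk : k.Prime) (hkp : k ≤ p)
    (F₁ : Finset (Fin ℓ₁ → ZMod k)) (hcard : F₁.card = N)
    (hcov : ∀ v ∈ F₁, ∀ w ∈ F₁, v ≠ w → ∀ s : ZMod k, ∃ i, v i - w i = s) :
    ∃ F₂ : Finset (Fin (2 * ℓ₁ * Nat.clog 2 k) → ZMod p),
      F₂.card = N ∧
      ∀ v ∈ F₂, ∀ w ∈ F₂, v ≠ w →
        ∀ k' : ℕ, k' ≤ k - 1 → ∃ i, v i - w i = (k' : ZMod p) :=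
  stmt6_general p k ℓ₁ N hk hkp F₁ hcard hcov
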